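/- arXiv:0807.5094 — 4 statements merged into one kernel-verified Lean document; each statement's English description precedes it below -/
import Mathlib

section
/- Every real g-row stochastic matrix R ∈ M_n(ℝ) can be written as R = Σᵢ rᵢ Rᵢ, where the Rᵢ are (entrywise nonnegative) row stochastic matrices and the rᵢ are real scalars with Σᵢ rᵢ = 1. -/
open Matrix

def GRowStochastic {n : ℕ} (R : Matrix (Fin n) (Fin n) ℝ) : Prop :=
  R *ᵥ (1 : Fin n → ℝ) = 1

def RowStochastic {n : ℕ} (R : Matrix (Fin n) (Fin n) ℝ) : Prop :=
  (∀ i j, 0 ≤ R i j) ∧ R *ᵥ (1 : Fin n → ℝ) = 1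

def GwMaj {n m : ℕ} (X Y : Matrix (Fin n) (Fin m) ℝ) : Prop :=
  ∃ R : Matrix (Fin n) (Fin n) ℝ, GRowStochastic R ∧ Y = R * X

def MatMaj {n m : ℕ} (X Y : Matrix (Fin n) (Fin m) ℝ) : Prop :=
  ∃ R : Matrix (Fin n) (Fin n) ℝ, RowStochastic R ∧ Y = R * X

/-!
Let `J` be the row stochastic matrix with all entries `1/n`. Adding `t • J` raises every entry
by `t/n`, so for `t` large `R + t • J` is nonnegative, and `S := (1 + t)⁻¹ • (R + t • J)` is row
stochastic because row sums `1` are preserved by affine combinations. Then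
`R = (1 + t) • S + (-t) • J` with `(1 + t) + (-t) = 1`.
-/

theorem Matrix.abs_apply_le_sum_sum_abs {m p : Type*} [Fintype m] [Fintype p]
    (A : Matrix m p ℝ) (i : m) (j : p) : |A i j| ≤ ∑ k, ∑ l, |A k l| :=
  calc |A i j| ≤ ∑ l, |A i l| :=
        Finset.single_le_sum (fun l _ => abs_nonneg (A i l)) (Finset.mem_univ j)
    _ ≤ ∑ k, ∑ l, |A k l| :=
        Finset.single_le_sum (f := fun k => ∑ l, |A k l|)
          (fun _ _ => Finset.sum_nonneg fun _ _ => abs_nonneg _) (Finset.mem_univ i)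

noncomputable def uniformStochastic (n : ℕ) : Matrix (Fin n) (Fin n) ℝ :=
  Matrix.of fun _ _ => (n : ℝ)⁻¹

section

variable {n : ℕ}

theorem GRowStochastic.smul_add_smul {R S : Matrix (Fin n) (Fin n) ℝ} (hR : GRowStochastic R)
    (hS : GRowStochastic S) {a b : ℝ} (hab : a + b = 1) : GRowStochastic (a • R + b • S) := by
  rw [GRowStochastic, add_mulVec, smul_mulVec, smul_mulVec, hR, hS, ← add_smul, hab, one_smul]

theorem RowStochastic.of_gRowStochastic_add_smul {R S : Matrix (Fin n) (Fin n) ℝ}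
    (hR : GRowStochastic R) (hS : GRowStochastic S) {t : ℝ} (ht : 0 ≤ t)
    (hnonneg : ∀ i j, 0 ≤ R i j + t * S i j) : RowStochastic ((1 + t)⁻¹ • (R + t • S)) := by
  have ht' : (1 + t)⁻¹ * t + (1 + t)⁻¹ = 1 := by field_simp; ring
  refine ⟨fun i j => ?_, ?_⟩
  · simpa using mul_nonneg (inv_nonneg.mpr (by linarith : 0 ≤ 1 + t)) (hnonneg i j)
  · rw [smul_add, smul_smul, add_comm]
    exact hS.smul_add_smul hR ht'

theorem rowStochastic_uniformStochastic : RowStochastic (uniformStochastic n) := by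
  refine ⟨fun _ _ => by simp [uniformStochastic], funext fun i => ?_⟩
  have : (n : ℝ) ≠ 0 := by exact_mod_cast (Fin.pos i).ne'
  simp [uniformStochastic, mulVec, dotProduct, this]

theorem add_mul_uniformStochastic_nonneg (R : Matrix (Fin n) (Fin n) ℝ) (i j : Fin n) :
    0 ≤ R i j + (n * ∑ k, ∑ l, |R k l|) * uniformStochastic n i j := by
  have hn : (n : ℝ) ≠ 0 := by exact_mod_cast (Fin.pos i).ne'
  rw [uniformStochastic, of_apply, mul_right_comm, mul_inv_cancel₀ hn, one_mul]
  linarith [neg_abs_le (R i j), R.abs_apply_le_sum_sum_abs i j]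

end

theorem stmt_14 {n : ℕ} (R : Matrix (Fin n) (Fin n) ℝ) (hR : GRowStochastic R) :
    ∃ (k : ℕ) (r : Fin k → ℝ) (S : Fin k → Matrix (Fin n) (Fin n) ℝ),
      (∀ i, RowStochastic (S i)) ∧ (∑ i, r i) = 1 ∧ R = ∑ i, r i • S i := by
  set J := uniformStochastic n
  set t : ℝ := n * ∑ k, ∑ l, |R k l|
  have ht : 0 ≤ t := by positivity
  have hJ : RowStochastic J := rowStochastic_uniformStochastic
  refine ⟨2, ![1 + t, -t], ![(1 + t)⁻¹ • (R + t • J), J], ?_, by simp, ?_⟩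
  · rw [Fin.forall_fin_two]
    exact ⟨RowStochastic.of_gRowStochastic_add_smul hR hJ.2 ht
      (add_mul_uniformStochastic_nonneg R), hJ⟩
  · have ht' : 1 + t ≠ 0 := by positivity
    simp only [Fin.sum_univ_two, cons_val_zero, cons_val_one, smul_smul, mul_inv_cancel₀ ht',
      one_smul]
    module
end

section
/- The linear operator T : M_2(ℝ) → M_2(ℝ) given by T(X) = AX with A = [[1,0],[−1,2]] strongly preserves gw-majorization but does not strongly preserve matrix majorization; in particular, with X = [[1,0],[0,0]] and Y = [[0,0],[1,0]], one has X ≻ Y but not T(X) ≻ T(Y). -/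
/-!
Since `A` is invertible with `A e = e`, conjugation `R ↦ A R A⁻¹` is a bijection of the matrices
with `R e = e` carrying `Y = R X` to `A Y = (A R A⁻¹)(A X)`; conjugation by `A` does not preserve
entrywise nonnegativity, however. For row-stochastic `R` each entry of `R X` is a convex
combination of its column in `X`, which rules out `T X ≻ T Y` for the given pair.
-/

open Matrix

variable {n m : ℕ}

theorem GRowStochastic.mul {R S : Matrix (Fin n) (Fin n) ℝ} (hR : GRowStochastic R)
    (hS : GRowStochastic S) : GRowStochastic (R * S) := by
  rw [GRowStochastic, ← mulVec_mulVec, hS, hR]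

theorem GRowStochastic.nonsing_inv {A : Matrix (Fin n) (Fin n) ℝ} (hA : IsUnit A.det)
    (hA1 : GRowStochastic A) : GRowStochastic A⁻¹ := by
  rw [GRowStochastic, ← hA1, mulVec_mulVec, nonsing_inv_mul A hA, one_mulVec, hA1]

theorem GwMaj.mul_left {A : Matrix (Fin n) (Fin n) ℝ} (hA : IsUnit A.det)
    (hA1 : GRowStochastic A) {X Y : Matrix (Fin n) (Fin m) ℝ} (h : GwMaj X Y) :
    GwMaj (A * X) (A * Y) := by
  obtain ⟨R, hR, rfl⟩ := h
  refine ⟨A * R * A⁻¹, (hA1.mul hR).mul (hA1.nonsing_inv hA), ?_⟩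
  simp only [Matrix.mul_assoc, nonsing_inv_mul_cancel_left A _ hA]

theorem gwMaj_mul_left_iff {A : Matrix (Fin n) (Fin n) ℝ} (hA : IsUnit A.det)
    (hA1 : GRowStochastic A) {X Y : Matrix (Fin n) (Fin m) ℝ} :
    GwMaj (A * X) (A * Y) ↔ GwMaj X Y := by
  refine ⟨fun h => ?_, GwMaj.mul_left hA hA1⟩
  simpa only [nonsing_inv_mul_cancel_left A _ hA] using
    h.mul_left (isUnit_nonsing_inv_det A hA) (hA1.nonsing_inv hA)

theorem RowStochastic.mul_apply_le {R : Matrix (Fin n) (Fin n) ℝ} (hR : RowStochastic R)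
    {X : Matrix (Fin n) (Fin m) ℝ} {j : Fin m} {c : ℝ} (hX : ∀ k, X k j ≤ c) (i : Fin n) :
    (R * X) i j ≤ c :=
  calc (R * X) i j = ∑ k, R i k * X k j := mul_apply
    _ ≤ ∑ k, R i k * c := Finset.sum_le_sum fun k _ => mul_le_mul_of_nonneg_left (hX k) (hR.1 i k)
    _ = c := by
      have hrow : ∑ k, R i k = 1 := by simpa [mulVec, dotProduct] using congrFun hR.2 i
      rw [← Finset.sum_mul, hrow, one_mul]

theorem MatMaj.apply_le {X Y : Matrix (Fin n) (Fin m) ℝ} (h : MatMaj X Y) {j : Fin m} {c : ℝ}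
    (hX : ∀ k, X k j ≤ c) (i : Fin n) : Y i j ≤ c := by
  obtain ⟨R, hR, rfl⟩ := h
  exact hR.mul_apply_le hX i

theorem matMaj_submatrix_perm (X : Matrix (Fin n) (Fin m) ℝ) (σ : Equiv.Perm (Fin n)) :
    MatMaj X (X.submatrix σ id) := by
  refine ⟨σ.toPEquiv.toMatrix, ⟨fun i j => ?_, ?_⟩, (PEquiv.toMatrix_toPEquiv_mul σ X).symm⟩
  · rw [PEquiv.toMatrix_apply]
    split_ifs <;> norm_num
  · rw [PEquiv.toMatrix_toPEquiv_mulVec]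
    rfl

theorem stmt_16 :
    (∀ X Y : Matrix (Fin 2) (Fin 2) ℝ,
        GwMaj X Y ↔ GwMaj (!![1, 0; -1, 2] * X) (!![1, 0; -1, 2] * Y)) ∧
    ¬ (∀ X Y : Matrix (Fin 2) (Fin 2) ℝ,
        MatMaj X Y ↔ MatMaj (!![1, 0; -1, 2] * X) (!![1, 0; -1, 2] * Y)) ∧
    MatMaj !![(1 : ℝ), 0; 0, 0] !![(0 : ℝ), 0; 1, 0] ∧
    ¬ MatMaj (!![1, 0; -1, 2] * !![(1 : ℝ), 0; 0, 0])
             (!![1, 0; -1, 2] * !![(0 : ℝ), 0; 1, 0]) := by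
  have hdet : IsUnit (!![1, 0; -1, 2] : Matrix (Fin 2) (Fin 2) ℝ).det := by
    simp [det_fin_two]
  have hA1 : GRowStochastic (!![1, 0; -1, 2] : Matrix (Fin 2) (Fin 2) ℝ) := by
    ext i; fin_cases i <;> norm_num [mulVec, dotProduct, Fin.sum_univ_two]
  have hmaj : MatMaj !![(1 : ℝ), 0; 0, 0] !![(0 : ℝ), 0; 1, 0] := by
    convert matMaj_submatrix_perm !![(1 : ℝ), 0; 0, 0] (Equiv.swap 0 1) using 1
    ext i j; fin_cases i <;> fin_cases j <;> simp
  -- column 0 of `A * X` is `(1, -1)`, while `(A * Y) 1 0 = 2`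
  have hnot : ¬ MatMaj (!![1, 0; -1, 2] * !![(1 : ℝ), 0; 0, 0])
      (!![1, 0; -1, 2] * !![(0 : ℝ), 0; 1, 0]) := fun h => by
    have := h.apply_le (j := 0) (c := 1) (fun k => by fin_cases k <;> simp) 1
    norm_num at this
  exact ⟨fun X Y => (gwMaj_mul_left_iff hdet hA1).symm, fun h => hnot ((h _ _).mp hmaj),
    hmaj, hnot⟩
end

section
/- A linear operator T : M_n(ℝ) → M_n(ℝ) strongly preserves matrix majorization if and only if T(X) = PXL for some permutation matrix P and some invertible matrix L ∈ M_n(ℝ). -/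
/-!
If `T X = P * X * L`, a row stochastic `R` with `Y = R * X` corresponds to `P R P⁻¹`, with
`T Y = (P R P⁻¹) * T X`, and `L` cancels on the right.

Conversely, a strong preserver is injective, hence bijective. Matrices with all rows equal are
the minimal elements of `≻` (a row stochastic matrix fixes them), so `T` permutes them, linearly:
`T (replicateRow a) = replicateRow (a ᵥ* L)` with `L` invertible. After replacing `T` by
`X ↦ T X L⁻¹`, `T` fixes each such matrix; since `X ≻ Y` as soon as `X` majorizes every
row-constant matrix built from a row of `Y`, `X` and `T X` majorize each other. For invertible
`X` this forces `T X = P X` with `P` a permutation matrix, and linearity along the line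
`1 + t Z`, invertible for infinitely many `t`, makes `P` independent of `X`.
-/

open Matrix

namespace RowStochastic

variable {n : ℕ} {R S M : Matrix (Fin n) (Fin n) ℝ}

theorem sum_apply (hR : RowStochastic R) (i : Fin n) : ∑ k, R i k = 1 := by
  simpa [mulVec, dotProduct] using congrFun hR.2 i

theorem apply_le_one (hR : RowStochastic R) (i j : Fin n) : R i j ≤ 1 :=
  (Finset.single_le_sum (fun k _ => hR.1 i k) (Finset.mem_univ j)).trans_eq (hR.sum_apply i)

theorem one : RowStochastic (1 : Matrix (Fin n) (Fin n) ℝ) :=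
  ⟨fun i j => by rw [one_apply]; split_ifs <;> norm_num, one_mulVec _⟩

theorem mul (hR : RowStochastic R) (hS : RowStochastic S) : RowStochastic (R * S) :=
  ⟨fun i j => (Finset.sum_nonneg fun k _ => mul_nonneg (hR.1 i k) (hS.1 k j)).trans_eq
    mul_apply.symm,
    by rw [← mulVec_mulVec, hS.2, hR.2]⟩

theorem permMatrix (σ : Equiv.Perm (Fin n)) : RowStochastic (σ.permMatrix ℝ) :=
  ⟨fun i j => by
      simp only [Equiv.Perm.permMatrix, PEquiv.toMatrix_apply]
      split_ifs <;> norm_num,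
    by rw [Matrix.permMatrix_mulVec]; rfl⟩

theorem mul_replicateRow {m : ℕ} (hR : RowStochastic R) (a : Fin m → ℝ) :
    R * replicateRow (Fin n) a = replicateRow (Fin n) a := by
  ext i j
  simp [mul_apply, ← Finset.sum_mul, hR.sum_apply i]

theorem row_eq_single_of_apply_eq_one (hR : RowStochastic R) {i j : Fin n} (h : R i j = 1) :
    R i = Pi.single j 1 := by
  have hrest : ∑ k ∈ Finset.univ.erase j, R i k = 0 := by
    have := Finset.add_sum_erase Finset.univ (R i) (Finset.mem_univ j)
    rw [hR.sum_apply i, h] at this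
    linarith
  funext k
  rcases eq_or_ne k j with rfl | hk
  · simp [h]
  · rw [Pi.single_eq_of_ne hk]
    exact (Finset.sum_eq_zero_iff_of_nonneg fun k _ => hR.1 i k).mp hrest k
      (Finset.mem_erase.mpr ⟨hk, Finset.mem_univ k⟩)

/-- The diagonal entry `(S * M) i i = 1` is a convex combination of entries `M j i ≤ 1`. -/
theorem apply_eq_one_of_mul_eq_one (hS : RowStochastic S) (hM : RowStochastic M)
    (h : S * M = 1) {i j : Fin n} (hij : S i j ≠ 0) : M j i = 1 := by
  have hdiag : ∑ k, S i k * M k i = 1 := by simpa [mul_apply] using congrFun (congrFun h i) i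
  have hgap : ∑ k, S i k * (1 - M k i) = 0 := by
    simp only [mul_sub, mul_one, Finset.sum_sub_distrib, hS.sum_apply i, hdiag, sub_self]
  have := (Finset.sum_eq_zero_iff_of_nonneg fun k _ =>
    mul_nonneg (hS.1 i k) (sub_nonneg.mpr (hM.apply_le_one k i))).mp hgap j (Finset.mem_univ j)
  linarith [(mul_eq_zero.mp this).resolve_left hij]

theorem exists_eq_permMatrix_of_mul_eq_one (hS : RowStochastic S) (hM : RowStochastic M)
    (h : S * M = 1) : ∃ σ : Equiv.Perm (Fin n), M = σ.permMatrix ℝ := by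
  have hpos : ∀ i, ∃ j, S i j ≠ 0 := fun i => by
    by_contra! hi
    simpa [hi] using hS.sum_apply i
  choose f hf using hpos
  have hrow : ∀ i, M (f i) = Pi.single i 1 := fun i =>
    hM.row_eq_single_of_apply_eq_one (hS.apply_eq_one_of_mul_eq_one hM h (hf i))
  have hinj : Function.Injective f := fun i i' hii' => by
    simpa [hrow, Pi.single_apply] using congrFun (congrArg M hii') i
  let σ := Equiv.ofBijective f (Finite.injective_iff_bijective.mp hinj)
  refine ⟨σ.symm, ext fun j k => ?_⟩
  obtain ⟨i, rfl⟩ := σ.surjective j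
  simp [σ, hrow, Equiv.Perm.permMatrix, PEquiv.toMatrix_apply, Pi.single_apply, eq_comm]

end RowStochastic

namespace MatMaj

variable {n m : ℕ} {X Y W : Matrix (Fin n) (Fin m) ℝ}

theorem refl (X : Matrix (Fin n) (Fin m) ℝ) : MatMaj X X :=
  ⟨1, RowStochastic.one, (Matrix.one_mul X).symm⟩

theorem eq_zero_of_zero_left (h : MatMaj 0 Y) : Y = 0 := by
  obtain ⟨R, -, rfl⟩ := h
  exact Matrix.mul_zero R

theorem eq_of_replicateRow_left {a : Fin m → ℝ} (h : MatMaj (replicateRow (Fin n) a) Y) :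
    Y = replicateRow (Fin n) a := by
  obtain ⟨R, hR, rfl⟩ := h
  exact hR.mul_replicateRow a

theorem replicateRow_row (X : Matrix (Fin n) (Fin m) ℝ) (i : Fin n) :
    MatMaj X (replicateRow (Fin n) (X i)) := by
  refine ⟨replicateRow (Fin n) (Pi.single i 1), ⟨fun _ k => ?_, ?_⟩, ?_⟩
  · by_cases hk : k = i <;> simp [hk]
  · ext r
    simp [mulVec, dotProduct, Pi.single_apply]
  · rw [← replicateRow_vecMul, single_one_vecMul]
    rfl

theorem of_forall_replicateRow (h : ∀ j, MatMaj W (replicateRow (Fin n) (Y j))) :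
    MatMaj W Y := by
  choose R hR hY using h
  refine ⟨of fun j k => R j j k, ⟨fun i j => (hR i).1 i j, funext fun i => ?_⟩,
    ext fun j k => ?_⟩
  · simpa [mulVec, dotProduct] using congrFun (hR i).2 i
  · simpa [mul_apply] using congrFun (congrFun (hY j) j) k

theorem mul_right_iff {C : Matrix (Fin m) (Fin m) ℝ} (hC : IsUnit C) :
    MatMaj (X * C) (Y * C) ↔ MatMaj X Y := by
  have hdet := (isUnit_iff_isUnit_det C).mp hC
  refine ⟨fun ⟨R, hR, hYC⟩ => ⟨R, hR, ?_⟩,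
    fun ⟨R, hR, hY⟩ => ⟨R, hR, by rw [hY, Matrix.mul_assoc]⟩⟩
  rw [← mul_nonsing_inv_cancel_right C Y hdet, hYC, Matrix.mul_assoc,
    mul_nonsing_inv_cancel_right C X hdet]

theorem permMatrix_mul (h : MatMaj X Y) (σ : Equiv.Perm (Fin n)) :
    MatMaj (σ.permMatrix ℝ * X) (σ.permMatrix ℝ * Y) := by
  obtain ⟨R, hR, rfl⟩ := h
  refine ⟨σ.permMatrix ℝ * R * σ⁻¹.permMatrix ℝ,
    ((RowStochastic.permMatrix σ).mul hR).mul (RowStochastic.permMatrix σ⁻¹), ?_⟩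
  rw [Matrix.mul_assoc _ _ (_ * X), ← Matrix.mul_assoc (σ⁻¹.permMatrix ℝ),
    ← Matrix.permMatrix_mul, mul_inv_cancel, Matrix.permMatrix_one, Matrix.one_mul,
    Matrix.mul_assoc]

theorem permMatrix_mul_iff (σ : Equiv.Perm (Fin n)) :
    MatMaj (σ.permMatrix ℝ * X) (σ.permMatrix ℝ * Y) ↔ MatMaj X Y := by
  have hcancel (Z : Matrix (Fin n) (Fin m) ℝ) :
      σ⁻¹.permMatrix ℝ * (σ.permMatrix ℝ * Z) = Z := by
    rw [← Matrix.mul_assoc, ← Matrix.permMatrix_mul, mul_inv_cancel,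
      Matrix.permMatrix_one, Matrix.one_mul]
  refine ⟨fun h => ?_, fun h => h.permMatrix_mul σ⟩
  simpa only [hcancel] using h.permMatrix_mul σ⁻¹

/-- The two row stochastic factors are inverse to each other, hence permutation matrices. -/
theorem exists_eq_permMatrix_mul_of_isUnit {W Y : Matrix (Fin n) (Fin n) ℝ} (hW : IsUnit W)
    (hWY : MatMaj W Y) (hYW : MatMaj Y W) :
    ∃ σ : Equiv.Perm (Fin n), Y = σ.permMatrix ℝ * W := by
  obtain ⟨M, hM, rfl⟩ := hWY
  obtain ⟨S, hS, hSMW⟩ := hYW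
  have hSM : S * M = 1 := by
    refine hW.mul_left_injective ?_
    simp only [Matrix.one_mul, Matrix.mul_assoc, ← hSMW]
  obtain ⟨σ, rfl⟩ := hS.exists_eq_permMatrix_of_mul_eq_one hM hSM
  exact ⟨σ, rfl⟩

end MatMaj

theorem LinearMap.eq_map_one_mul_of_forall_isUnit {n : ℕ}
    (S : Matrix (Fin n) (Fin n) ℝ →ₗ[ℝ] Matrix (Fin n) (Fin n) ℝ)
    (hS : ∀ W, IsUnit W → ∃ σ : Equiv.Perm (Fin n), S W = σ.permMatrix ℝ * W)
    (Z : Matrix (Fin n) (Fin n) ℝ) : S Z = S 1 * Z := by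
  -- `1 + t • Z` is invertible for infinitely many `t`, so two of them share the same permutation;
  -- comparing the two affine identities in `t` separates `S 1` from `S Z`.
  set U := {t : ℝ | (1 + t • Z).det ≠ 0}
  have hU : U ∈ nhds (0 : ℝ) :=
    (isOpen_ne_fun (continuous_const.add (continuous_id.smul continuous_const)).matrix_det
      continuous_const).mem_nhds (by simp)
  have : Infinite U := (infinite_of_mem_nhds 0 hU).to_subtype
  choose σ hσ using fun t : U =>
    hS (1 + (t : ℝ) • Z) ((Matrix.isUnit_iff_isUnit_det _).mpr (isUnit_iff_ne_zero.mpr t.2))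
  obtain ⟨t₁, t₂, hne, hσ₁₂⟩ := Finite.exists_ne_map_eq_of_infinite σ
  set P := (σ t₁).permMatrix ℝ
  have h₁ : S 1 + (t₁ : ℝ) • S Z = P + (t₁ : ℝ) • (P * Z) := by
    rw [← map_smul, ← map_add, hσ t₁, Matrix.mul_add, Matrix.mul_one, mul_smul_comm]
  have h₂ : S 1 + (t₂ : ℝ) • S Z = P + (t₂ : ℝ) • (P * Z) := by
    rw [← map_smul, ← map_add, hσ t₂, ← hσ₁₂, Matrix.mul_add, Matrix.mul_one,
      mul_smul_comm]
  have hZ : S Z = P * Z := by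
    refine smul_right_injective _ (sub_ne_zero.mpr fun h => hne (Subtype.ext h)) ?_
    linear_combination (norm := module) h₁ - h₂
  rw [hZ, add_left_injective _ (h₁.trans (by rw [hZ]))]

def StronglyPreservesMatMaj {n m : ℕ}
    (T : Matrix (Fin n) (Fin m) ℝ →ₗ[ℝ] Matrix (Fin n) (Fin m) ℝ) : Prop :=
  ∀ X Y, MatMaj X Y ↔ MatMaj (T X) (T Y)

namespace StronglyPreservesMatMaj

section Rectangular

variable {n m : ℕ} {T : Matrix (Fin n) (Fin m) ℝ →ₗ[ℝ] Matrix (Fin n) (Fin m) ℝ}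

theorem injective (hT : StronglyPreservesMatMaj T) : Function.Injective T := by
  refine (injective_iff_map_eq_zero T).mpr fun X hX => ?_
  refine ((hT 0 X).mpr ?_).eq_zero_of_zero_left
  rw [hX, map_zero]
  exact MatMaj.refl _

/-- Matrices with all rows equal are exactly the minimal elements of the majorization preorder,
and a bijective strong preserver permutes the minimal elements. -/
theorem map_replicateRow (hT : StronglyPreservesMatMaj T) (a : Fin m → ℝ) (i : Fin n) :
    T (replicateRow (Fin n) a) = replicateRow (Fin n) (T (replicateRow (Fin n) a) i) := by
  obtain ⟨X, hX⟩ := LinearMap.injective_iff_surjective.mp hT.injective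
    (replicateRow (Fin n) (T (replicateRow (Fin n) a) i))
  have hmaj := (hT _ X).mpr (hX ▸ MatMaj.replicateRow_row _ i)
  rw [← hX, hmaj.eq_of_replicateRow_left]

theorem exists_isUnit_map_replicateRow [NeZero n] (hT : StronglyPreservesMatMaj T) :
    ∃ L : Matrix (Fin m) (Fin m) ℝ, IsUnit L ∧
      ∀ a, T (replicateRow (Fin n) a) = replicateRow (Fin n) (a ᵥ* L) := by
  let f : (Fin m → ℝ) →ₗ[ℝ] Fin m → ℝ :=
    { toFun a := T (replicateRow (Fin n) a) 0
      map_add' a b := by rw [replicateRow_add, map_add]; rfl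
      map_smul' c a := by rw [replicateRow_smul, map_smul]; rfl }
  have hf : ∀ a, T (replicateRow (Fin n) a) = replicateRow (Fin n) (f a) :=
    fun a => hT.map_replicateRow a 0
  refine ⟨(LinearMap.toMatrix' f)ᵀ, ?_,
    fun a => by rw [vecMul_transpose, LinearMap.toMatrix'_mulVec, hf]⟩
  refine vecMul_injective_iff_isUnit.mp fun a b hab => replicateRow_injective (ι := Fin n) ?_
  simp only [vecMul_transpose, LinearMap.toMatrix'_mulVec] at hab
  exact hT.injective (by rw [hf, hf, hab])

theorem matMaj_map_and_map_matMaj (hT : StronglyPreservesMatMaj T)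
    (hfix : ∀ a, T (replicateRow (Fin n) a) = replicateRow (Fin n) a)
    (X : Matrix (Fin n) (Fin m) ℝ) :
    MatMaj X (T X) ∧ MatMaj (T X) X := by
  refine ⟨MatMaj.of_forall_replicateRow fun j => (hT _ _).mpr ?_,
    MatMaj.of_forall_replicateRow fun i => ?_⟩
  · rw [hfix]
    exact MatMaj.replicateRow_row _ j
  · simpa only [hfix] using (hT _ _).mp (MatMaj.replicateRow_row X i)

end Rectangular

variable {n : ℕ} {T : Matrix (Fin n) (Fin n) ℝ →ₗ[ℝ] Matrix (Fin n) (Fin n) ℝ}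

theorem comp_mulRight (hT : StronglyPreservesMatMaj T) {C : Matrix (Fin n) (Fin n) ℝ}
    (hC : IsUnit C) : StronglyPreservesMatMaj ((LinearMap.mulRight ℝ C).comp T) := fun X Y => by
  simpa only [LinearMap.comp_apply, LinearMap.mulRight_apply, MatMaj.mul_right_iff hC] using hT X Y

theorem exists_perm_of_map_replicateRow (hT : StronglyPreservesMatMaj T)
    (hfix : ∀ a, T (replicateRow (Fin n) a) = replicateRow (Fin n) a) :
    ∃ σ : Equiv.Perm (Fin n), ∀ X, T X = σ.permMatrix ℝ * X := by
  have hunit (W) (hW : IsUnit W) : ∃ σ : Equiv.Perm (Fin n), T W = σ.permMatrix ℝ * W :=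
    (hT.matMaj_map_and_map_matMaj hfix W).elim (MatMaj.exists_eq_permMatrix_mul_of_isUnit hW)
  obtain ⟨σ, hσ⟩ := hunit 1 isUnit_one
  refine ⟨σ, fun X => ?_⟩
  rw [T.eq_map_one_mul_of_forall_isUnit hunit X, hσ, Matrix.mul_one]

end StronglyPreservesMatMaj

theorem stmt_17_general {n : ℕ}
    (T : Matrix (Fin n) (Fin n) ℝ →ₗ[ℝ] Matrix (Fin n) (Fin n) ℝ) :
    (∀ X Y, MatMaj X Y ↔ MatMaj (T X) (T Y)) ↔
      ∃ (σ : Equiv.Perm (Fin n)) (L : Matrix (Fin n) (Fin n) ℝ),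
        IsUnit L ∧ ∀ X, T X = σ.permMatrix ℝ * X * L := by
  refine ⟨fun (hT : StronglyPreservesMatMaj T) => ?_, fun ⟨σ, L, hL, hTX⟩ X Y => ?_⟩
  · obtain rfl | hn := n.eq_zero_or_pos
    · exact ⟨1, 1, isUnit_one, fun X => Subsingleton.elim _ _⟩
    have : NeZero n := ⟨hn.ne'⟩
    obtain ⟨L, hL, hTL⟩ := hT.exists_isUnit_map_replicateRow
    have hdet := (isUnit_iff_isUnit_det L).mp hL
    have hS : StronglyPreservesMatMaj ((LinearMap.mulRight ℝ L⁻¹).comp T) :=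
      hT.comp_mulRight (isUnit_nonsing_inv_iff.mpr hL)
    obtain ⟨σ, hσ⟩ := hS.exists_perm_of_map_replicateRow fun a => by
      rw [LinearMap.comp_apply, hTL, LinearMap.mulRight_apply, ← replicateRow_vecMul,
        vecMul_vecMul, mul_nonsing_inv L hdet, vecMul_one]
    refine ⟨σ, L, hL, fun X => ?_⟩
    rw [← hσ, LinearMap.comp_apply, LinearMap.mulRight_apply,
      nonsing_inv_mul_cancel_right L _ hdet]
  · simp only [hTX, MatMaj.mul_right_iff hL, MatMaj.permMatrix_mul_iff]

theorem stmt_17 {n : ℕ} (hn : 2 ≤ n)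
    (T : Matrix (Fin n) (Fin n) ℝ →ₗ[ℝ] Matrix (Fin n) (Fin n) ℝ) :
    (∀ X Y, MatMaj X Y ↔ MatMaj (T X) (T Y)) ↔
      ∃ (σ : Equiv.Perm (Fin n)) (L : Matrix (Fin n) (Fin n) ℝ),
        IsUnit L ∧ ∀ X, T X = σ.permMatrix ℝ * X * L :=
  stmt_17_general T
end

section
/- If A ∈ M_n(ℝ) is such that both A and A⁻¹ are row stochastic, then A is a permutation matrix. -/
/-!
Write `B = A⁻¹`. Since `A` and `B` are nonnegative, every term `A i j * B j k` of an entry of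
`A * B = 1` is nonnegative, so all terms of an off-diagonal entry vanish, while each diagonal entry
has a nonzero term `A i (f i) * B (f i) i`. If `f i = f i'` with `i ≠ i'`, the off-diagonal term
`A i (f i) * B (f i) i'` would be nonzero; so `f` is a permutation `σ`, and the same argument shows
that `A i j = 0` for `j ≠ σ i`. The row sums of `A` then force `A i (σ i) = 1`.
-/

open Matrix

theorem Matrix.isUnit_det_of_inv_mulVec_one {ι R : Type*} [Fintype ι] [DecidableEq ι]
    [CommRing R] [Nontrivial R] {A : Matrix ι ι R} (h : A⁻¹ *ᵥ 1 = 1) : IsUnit A.det := by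
  by_contra hA
  cases isEmpty_or_nonempty ι with
  | inl _ => exact hA (by simp [det_isEmpty])
  | inr hι =>
    obtain ⟨i⟩ := hι
    rw [nonsing_inv_apply_not_isUnit A hA, zero_mulVec] at h
    simpa using congrFun h i

section NonnegMulEqOne

variable {ι R : Type*} [Fintype ι] [DecidableEq ι] [Semiring R] {A B : Matrix ι ι R}

theorem Matrix.exists_mul_apply_ne_zero_of_mul_eq_one [Nontrivial R] (hAB : A * B = 1) (i : ι) :
    ∃ j, A i j * B j i ≠ 0 := by
  have h : ∑ j, A i j * B j i = 1 := by
    simpa [mul_apply] using congrFun (congrFun hAB i) i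
  obtain ⟨j, -, hj⟩ := Finset.exists_ne_zero_of_sum_ne_zero (h ▸ one_ne_zero)
  exact ⟨j, hj⟩

variable [PartialOrder R] [IsOrderedRing R]

theorem Matrix.mul_apply_eq_zero_of_nonneg_of_mul_eq_one (hA : ∀ i j, 0 ≤ A i j)
    (hB : ∀ i j, 0 ≤ B i j) (hAB : A * B = 1) {i k : ι} (hik : i ≠ k) (j : ι) :
    A i j * B j k = 0 := by
  have h : ∑ j, A i j * B j k = 0 := by
    simpa [mul_apply, hik] using congrFun (congrFun hAB i) k
  exact (Finset.sum_eq_zero_iff_of_nonneg fun j _ ↦ mul_nonneg (hA i j) (hB j k)).1 h j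
    (Finset.mem_univ j)

theorem Matrix.exists_perm_apply_eq_zero_of_nonneg_of_mul_eq_one [Nontrivial R] [NoZeroDivisors R]
    (hA : ∀ i j, 0 ≤ A i j) (hB : ∀ i j, 0 ≤ B i j) (hAB : A * B = 1) :
    ∃ σ : Equiv.Perm ι, ∀ i j, j ≠ σ i → A i j = 0 := by
  have hoff {i k : ι} (hik : i ≠ k) (j : ι) : A i j * B j k = 0 :=
    mul_apply_eq_zero_of_nonneg_of_mul_eq_one hA hB hAB hik j
  choose f hf using exists_mul_apply_ne_zero_of_mul_eq_one hAB
  have hfA i : A i (f i) ≠ 0 := left_ne_zero_of_mul (hf i)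
  have hfB i : B (f i) i ≠ 0 := right_ne_zero_of_mul (hf i)
  have hf_inj : Function.Injective f := fun i i' hii' ↦ by
    by_contra hne
    exact mul_ne_zero (hfA i) (hii' ▸ hfB i') (hoff hne (f i))
  let σ := Equiv.ofBijective f hf_inj.bijective_of_finite
  refine ⟨σ, fun i j hj ↦ ?_⟩
  obtain ⟨i', rfl⟩ := σ.surjective j
  have hne : i ≠ i' := by
    rintro rfl
    exact hj rfl
  exact (mul_eq_zero.1 (hoff hne (σ i'))).resolve_right (hfB i')

end NonnegMulEqOne

theorem Matrix.eq_permMatrix_of_mulVec_one {ι R : Type*} [Fintype ι] [DecidableEq ι]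
    [NonAssocSemiring R] {A : Matrix ι ι R} (σ : Equiv.Perm ι) (hA : A *ᵥ 1 = 1)
    (hσ : ∀ i j, j ≠ σ i → A i j = 0) : A = σ.permMatrix R := by
  have hdiag i : A i (σ i) = 1 := by
    have hrow := congrFun hA i
    rw [mulVec, dotProduct, Finset.sum_eq_single (σ i) (fun j _ hj ↦ by simp [hσ i j hj])
      (by simp)] at hrow
    simpa using hrow
  ext i j
  by_cases hj : j = σ i
  · subst hj
    simp [hdiag]
  · simp [hσ i j hj, Equiv.Perm.permMatrix, PEquiv.toMatrix_apply, Ne.symm hj]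

theorem stmt_19 {n : ℕ} (A : Matrix (Fin n) (Fin n) ℝ)
    (hA : RowStochastic A) (hAi : RowStochastic A⁻¹) :
    ∃ σ : Equiv.Perm (Fin n), A = σ.permMatrix ℝ := by
  obtain ⟨hA_nonneg, hA_one⟩ := hA
  obtain ⟨hAi_nonneg, hAi_one⟩ := hAi
  have hAAi : A * A⁻¹ = 1 := mul_nonsing_inv A (isUnit_det_of_inv_mulVec_one hAi_one)
  obtain ⟨σ, hσ⟩ :=
    exists_perm_apply_eq_zero_of_nonneg_of_mul_eq_one hA_nonneg hAi_nonneg hAAi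
  exact ⟨σ, eq_permMatrix_of_mulVec_one σ hA_one hσ⟩
end
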